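/- arXiv:2605.29002 — 2 statements merged into one kernel-verified Lean document; each statement's English description precedes it below -/
import Mathlib

section
/- Let H be a real Hilbert space, let F_1, …, F_N be closed subspaces of H with orthogonal projections Π_1, …, Π_N, let q ∈ H with ‖q‖ ≤ B, and let π_1, …, π_N be nonnegative reals with Σ_j π_j = 1. For each j set ε_j = ‖q − Π_j q‖, and suppose for each pair (i, j) that s_{ij} ≥ 0 satisfies ‖(id − Π_i) ∘ Π_j‖_op ≤ s_{ij} and ‖(id − Π_j) ∘ Π_i‖_op ≤ s_{ij}. Then for each index i: ‖Π_i q − Σ_{j=1}^N π_j Π_j q‖ ≤ 2B Σ_{j≠i} π_j s_{ij} + Σ_{j≠i} π_j (ε_i + ε_j). Consequently, for every k ∈ H with ‖k‖ ≤ 1, |⟨Π_i q − Σ_j π_j Π_j q, k⟩| is bounded by the same right-hand side. -/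
open RealInnerProductSpace Finset

/-- Lemma 1 (representation bias): for each client `i`, the deviation of its oracle
projection `Π_i q` from the federation-weighted oracle mean `∑ j, π j • Π_j q` is
bounded by `2B ∑_{j≠i} π_j s_{ij} + ∑_{j≠i} π_j (ε_i + ε_j)`, and the same bound
holds pointwise against any `k` with `‖k‖ ≤ 1`. -/
theorem stmt7 {H : Type*} [NormedAddCommGroup H] [InnerProductSpace ℝ H]
    [CompleteSpace H]
    (N : ℕ) (F : Fin N → Submodule ℝ H)
    (hFc : ∀ j, IsClosed ((F j : Set H)))
    [∀ j, Submodule.HasOrthogonalProjection (F j)]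
    (q : H) (B : ℝ) (hq : ‖q‖ ≤ B)
    (π : Fin N → ℝ) (hπ : ∀ j, 0 ≤ π j) (hsum : ∑ j, π j = 1)
    (ε : Fin N → ℝ) (hε : ∀ j, ε j = ‖q - (Submodule.orthogonalProjectionOnto (F j) q : H)‖)
    (s : Fin N → Fin N → ℝ) (hs : ∀ i j, 0 ≤ s i j)
    (hs₁ : ∀ i j, ‖(ContinuousLinearMap.id ℝ H -
        (F i).subtypeL.comp (Submodule.orthogonalProjectionOnto (F i))).comp
        ((F j).subtypeL.comp (Submodule.orthogonalProjectionOnto (F j)))‖ ≤ s i j)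
    (hs₂ : ∀ i j, ‖(ContinuousLinearMap.id ℝ H -
        (F j).subtypeL.comp (Submodule.orthogonalProjectionOnto (F j))).comp
        ((F i).subtypeL.comp (Submodule.orthogonalProjectionOnto (F i)))‖ ≤ s i j)
    (i : Fin N) :
    ‖(Submodule.orthogonalProjectionOnto (F i) q : H) -
        ∑ j, π j • (Submodule.orthogonalProjectionOnto (F j) q : H)‖ ≤
      2 * B * (∑ j ∈ univ.erase i, π j * s i j) +
        ∑ j ∈ univ.erase i, π j * (ε i + ε j) ∧
    ∀ k : H, ‖k‖ ≤ 1 →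
      |⟪(Submodule.orthogonalProjectionOnto (F i) q : H) -
          ∑ j, π j • (Submodule.orthogonalProjectionOnto (F j) q : H), k⟫| ≤
        2 * B * (∑ j ∈ univ.erase i, π j * s i j) +
          ∑ j ∈ univ.erase i, π j * (ε i + ε j) := by
  set P : Fin N → H →L[ℝ] H := fun j => (F j).subtypeL.comp (Submodule.orthogonalProjectionOnto (F j))
    with hP
  have hPq : ∀ j (x : H), (Submodule.orthogonalProjectionOnto (F j) x : H) = P j x := fun j x => rfl
  have hB : 0 ≤ B := le_trans (norm_nonneg q) hq
  have hεn : ∀ j, 0 ≤ ε j := fun j => (hε j) ▸ norm_nonneg _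
  have hPnorm : ∀ j (x : H), ‖P j x‖ ≤ ‖x‖ := by
    intro j x
    have : ‖P j x‖ = ‖Submodule.orthogonalProjectionOnto (F j) x‖ := rfl
    rw [this]
    calc ‖Submodule.orthogonalProjectionOnto (F j) x‖ ≤ ‖Submodule.orthogonalProjectionOnto (F j)‖ * ‖x‖ :=
          (Submodule.orthogonalProjectionOnto (F j)).le_opNorm x
      _ ≤ 1 * ‖x‖ := by
          apply mul_le_mul_of_nonneg_right (Submodule.orthogonalProjectionOnto_norm_le _) (norm_nonneg x)
      _ = ‖x‖ := one_mul ‖x‖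
  have key : ∀ j, ‖P i q - P j q‖ ≤ 2 * B * s i j + (ε i + ε j) := by
    intro j
    have hdecomp : P i q - P j q =
        P i (q - P j q) - ((ContinuousLinearMap.id ℝ H - P i).comp (P j)) q := by
      simp only [ContinuousLinearMap.comp_apply, ContinuousLinearMap.sub_apply,
        ContinuousLinearMap.id_apply, map_sub]
      abel
    calc ‖P i q - P j q‖
        = ‖P i (q - P j q) - ((ContinuousLinearMap.id ℝ H - P i).comp (P j)) q‖ := by
          rw [hdecomp]
      _ ≤ ‖P i (q - P j q)‖ + ‖((ContinuousLinearMap.id ℝ H - P i).comp (P j)) q‖ :=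
          norm_sub_le _ _
      _ ≤ ε j + s i j * B := by
          gcongr
          · rw [hε j, hPq]; exact hPnorm i _
          · calc ‖((ContinuousLinearMap.id ℝ H - P i).comp (P j)) q‖
                ≤ ‖(ContinuousLinearMap.id ℝ H - P i).comp (P j)‖ * ‖q‖ :=
                  ContinuousLinearMap.le_opNorm _ q
              _ ≤ s i j * B := mul_le_mul (hs₁ i j) hq (norm_nonneg q)
                  (le_trans (norm_nonneg _) (hs₁ i j))
      _ ≤ 2 * B * s i j + (ε i + ε j) := by
          have h1 : s i j * B ≤ 2 * B * s i j := by nlinarith [hs i j]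
          have := hεn i
          linarith
  have hmain : ‖(Submodule.orthogonalProjectionOnto (F i) q : H) -
      ∑ j, π j • (Submodule.orthogonalProjectionOnto (F j) q : H)‖ ≤
      2 * B * (∑ j ∈ univ.erase i, π j * s i j) +
        ∑ j ∈ univ.erase i, π j * (ε i + ε j) := by
    have hrw : (Submodule.orthogonalProjectionOnto (F i) q : H) -
        ∑ j, π j • (Submodule.orthogonalProjectionOnto (F j) q : H)
        = ∑ j, π j • (P i q - P j q) := by
      simp only [smul_sub, Finset.sum_sub_distrib, ← Finset.sum_smul, hsum, one_smul, hPq]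
    rw [hrw]
    have h0 : π i • (P i q - P i q) = 0 := by simp
    rw [← Finset.sum_erase_add univ _ (Finset.mem_univ i), h0, add_zero]
    calc ‖∑ j ∈ univ.erase i, π j • (P i q - P j q)‖
        ≤ ∑ j ∈ univ.erase i, ‖π j • (P i q - P j q)‖ := norm_sum_le _ _
      _ ≤ ∑ j ∈ univ.erase i, π j * (2 * B * s i j + (ε i + ε j)) := by
          apply Finset.sum_le_sum
          intro j _
          rw [norm_smul, Real.norm_eq_abs, abs_of_nonneg (hπ j)]
          exact mul_le_mul_of_nonneg_left (key j) (hπ j)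
      _ = 2 * B * (∑ j ∈ univ.erase i, π j * s i j) +
          ∑ j ∈ univ.erase i, π j * (ε i + ε j) := by
          rw [Finset.mul_sum, ← Finset.sum_add_distrib]
          apply Finset.sum_congr rfl
          intro j _; ring
  refine ⟨hmain, fun k hk => ?_⟩
  calc |⟪(Submodule.orthogonalProjectionOnto (F i) q : H) -
      ∑ j, π j • (Submodule.orthogonalProjectionOnto (F j) q : H), k⟫|
      ≤ ‖(Submodule.orthogonalProjectionOnto (F i) q : H) -
          ∑ j, π j • (Submodule.orthogonalProjectionOnto (F j) q : H)‖ * ‖k‖ :=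
        abs_real_inner_le_norm _ _
    _ ≤ ‖(Submodule.orthogonalProjectionOnto (F i) q : H) -
          ∑ j, π j • (Submodule.orthogonalProjectionOnto (F j) q : H)‖ * 1 := by
        exact mul_le_mul_of_nonneg_left hk (norm_nonneg _)
    _ = _ := mul_one _
    _ ≤ _ := hmain
end

section
/- Let X ∈ ℝ^{m×D}, G = XXᵀ, λ > 0, and let γ ≥ 0 be such that ⟨v, G v⟩ ≥ γ ‖v‖² for every v in col(X). Let φ ∈ ℝ^D with ‖φ‖ ≤ 1 and let d ∈ col(X). Then |(Xφ)ᵀ (G + λ I)⁻¹ d| ≤ ‖d‖ / √(γ + λ). -/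
open Matrix

private lemma dot_self_nonneg {n : ℕ} (v : Fin n → ℝ) : 0 ≤ v ⬝ᵥ v :=
  Finset.sum_nonneg fun i _ => mul_self_nonneg _

private lemma cs_dot {n : ℕ} (a b : Fin n → ℝ) :
    |a ⬝ᵥ b| ≤ Real.sqrt (a ⬝ᵥ a) * Real.sqrt (b ⬝ᵥ b) := by
  have h := Finset.sum_mul_sq_le_sq_mul_sq Finset.univ a b
  have ha : ∑ i, a i ^ 2 = a ⬝ᵥ a := by simp [dotProduct, sq]
  have hb : ∑ i, b i ^ 2 = b ⬝ᵥ b := by simp [dotProduct, sq]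
  rw [ha, hb] at h
  have : |a ⬝ᵥ b| = Real.sqrt ((a ⬝ᵥ b) ^ 2) := (Real.sqrt_sq_eq_abs _).symm
  rw [this, ← Real.sqrt_mul (dot_self_nonneg a)]
  exact Real.sqrt_le_sqrt h

/-- Aggregation-distortion bound (Term B₂): with `G = XXᵀ`, `γ` a lower bound on the
quadratic form of `G` on `col(X)`, `‖φ‖ ≤ 1` and `d ∈ col(X)`,
`|(Xφ)ᵀ (G+λI)⁻¹ d| ≤ ‖d‖ / √(γ+λ)`. -/
theorem stmt11 {m D : ℕ} (X : Matrix (Fin m) (Fin D) ℝ)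
    (G : Matrix (Fin m) (Fin m) ℝ) (hG : G = X * Xᵀ)
    (lam : ℝ) (hlam : 0 < lam) (γ : ℝ) (hγ : 0 ≤ γ)
    (hrange : ∀ v ∈ LinearMap.range X.mulVecLin, γ * (v ⬝ᵥ v) ≤ v ⬝ᵥ (G *ᵥ v))
    (φ : Fin D → ℝ) (hφ : Real.sqrt (φ ⬝ᵥ φ) ≤ 1)
    (d : Fin m → ℝ) (hd : d ∈ LinearMap.range X.mulVecLin) :
    |(X *ᵥ φ) ⬝ᵥ ((G + lam • (1 : Matrix (Fin m) (Fin m) ℝ))⁻¹ *ᵥ d)| ≤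
      Real.sqrt (d ⬝ᵥ d) / Real.sqrt (γ + lam) := by
  classical
  set A : Matrix (Fin m) (Fin m) ℝ := G + lam • (1 : Matrix (Fin m) (Fin m) ℝ) with hA
  have hGpsd : G.PosSemidef := by
    rw [hG, ← Matrix.conjTranspose_eq_transpose_of_trivial]
    exact Matrix.posSemidef_self_mul_conjTranspose X
  have hone : (lam • (1 : Matrix (Fin m) (Fin m) ℝ)).PosDef := by
    rw [Matrix.smul_one_eq_diagonal]
    exact Matrix.posDef_diagonal_iff.mpr fun _ => hlam
  have hApd : A.PosDef := Matrix.PosDef.posSemidef_add hGpsd hone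
  have hdet : IsUnit A.det := hApd.det_pos.ne'.isUnit
  have hInv : A⁻¹ * A = 1 := Matrix.nonsing_inv_mul A hdet
  have hInv2 : A * A⁻¹ = 1 := Matrix.mul_nonsing_inv A hdet
  set u : Fin m → ℝ := A⁻¹ *ᵥ d with hu
  have hAu : A *ᵥ u = d := by
    rw [hu, Matrix.mulVec_mulVec, hInv2, Matrix.one_mulVec]
  -- membership of u in the range
  set S : Submodule ℝ (Fin m → ℝ) := LinearMap.range X.mulVecLin with hS
  have hmaps : ∀ x ∈ S, A.mulVecLin x ∈ S := by
    rintro x ⟨w, rfl⟩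
    refine ⟨Xᵀ *ᵥ (X *ᵥ w) + lam • w, ?_⟩
    simp only [Matrix.mulVecLin_apply, hA, Matrix.add_mulVec, hG,
      Matrix.smul_mulVec, Matrix.one_mulVec, ← Matrix.mulVec_mulVec,
      Matrix.mulVec_add, Matrix.mulVec_smul]
  have hAinj : Function.Injective A.mulVecLin := by
    intro a b hab
    have : A *ᵥ a = A *ᵥ b := hab
    have h2 : A⁻¹ *ᵥ (A *ᵥ a) = A⁻¹ *ᵥ (A *ᵥ b) := by rw [this]
    simpa [Matrix.mulVec_mulVec, hInv, Matrix.one_mulVec] using h2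
  have hfinj : Function.Injective (A.mulVecLin.restrict hmaps) := by
    intro a b hab
    have : A.mulVecLin (a : Fin m → ℝ) = A.mulVecLin (b : Fin m → ℝ) :=
      congrArg Subtype.val hab
    exact Subtype.ext (hAinj this)
  have hfsurj : Function.Surjective (A.mulVecLin.restrict hmaps) :=
    LinearMap.injective_iff_surjective.mp hfinj
  obtain ⟨w, hw⟩ := hfsurj ⟨d, hd⟩
  have hwd : A *ᵥ (w : Fin m → ℝ) = d := congrArg Subtype.val hw
  have hu_mem : u ∈ S := by
    have huw : u = (w : Fin m → ℝ) := by
      rw [hu, ← hwd, Matrix.mulVec_mulVec, hInv, Matrix.one_mulVec]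
    rw [huw]; exact w.2
  -- analysis
  set y : Fin D → ℝ := Xᵀ *ᵥ u with hy
  have hvecmul : u ᵥ* X = y := by rw [hy, Matrix.mulVec_transpose]
  have hLHS : (X *ᵥ φ) ⬝ᵥ u = φ ⬝ᵥ y := by
    rw [dotProduct_comm, Matrix.dotProduct_mulVec, hvecmul, dotProduct_comm]
  have hq : u ⬝ᵥ (G *ᵥ u) = y ⬝ᵥ y := by
    rw [hG, ← Matrix.mulVec_mulVec, Matrix.dotProduct_mulVec, hvecmul]
  have hud : u ⬝ᵥ d = y ⬝ᵥ y + lam * (u ⬝ᵥ u) := by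
    rw [← hAu, hA, Matrix.add_mulVec, dotProduct_add, hq,
      Matrix.smul_mulVec, Matrix.one_mulVec, dotProduct_smul, smul_eq_mul]
  have hγq : γ * (u ⬝ᵥ u) ≤ y ⬝ᵥ y := hq ▸ hrange u hu_mem
  set Q : ℝ := y ⬝ᵥ y with hQ
  have hQ0 : 0 ≤ Q := dot_self_nonneg y
  set nu : ℝ := Real.sqrt (u ⬝ᵥ u) with hnu
  set nd : ℝ := Real.sqrt (d ⬝ᵥ d) with hnd
  have hnu0 : 0 ≤ nu := Real.sqrt_nonneg _
  have hnd0 : 0 ≤ nd := Real.sqrt_nonneg _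
  have hnusq : nu ^ 2 = u ⬝ᵥ u := Real.sq_sqrt (dot_self_nonneg u)
  have hndsq : nd ^ 2 = d ⬝ᵥ d := Real.sq_sqrt (dot_self_nonneg d)
  have hcs : u ⬝ᵥ d ≤ nu * nd := le_trans (le_abs_self _) (cs_dot u d)
  have hsum : 0 < γ + lam := by linarith
  have hkey : Q ≤ nd ^ 2 / (γ + lam) := by
    have h1 : (γ + lam) * nu ^ 2 ≤ nu * nd := by
      rw [hnusq]; calc (γ + lam) * (u ⬝ᵥ u) = γ * (u ⬝ᵥ u) + lam * (u ⬝ᵥ u) := by ring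
        _ ≤ y ⬝ᵥ y + lam * (u ⬝ᵥ u) := by linarith
        _ = u ⬝ᵥ d := hud.symm
        _ ≤ nu * nd := hcs
    have h2 : Q ≤ nu * nd := by
      have : Q ≤ u ⬝ᵥ d := by
        have h3 : 0 ≤ lam * (u ⬝ᵥ u) := mul_nonneg hlam.le (dot_self_nonneg u)
        linarith [hud]
      linarith [hcs]
    rcases eq_or_lt_of_le hnu0 with h | h
    · have : nu = 0 := h.symm
      rw [this] at h2
      simp only [zero_mul] at h2
      exact le_trans h2 (div_nonneg (sq_nonneg _) hsum.le)
    · have h4 : (γ + lam) * nu ≤ nd := by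
        have := h1
        rw [sq] at this
        nlinarith
      have h5 : nu ≤ nd / (γ + lam) := by
        rw [le_div_iff₀ hsum]; linarith [h4]
      calc Q ≤ nu * nd := h2
        _ ≤ (nd / (γ + lam)) * nd := by
            apply mul_le_mul_of_nonneg_right h5 hnd0
        _ = nd ^ 2 / (γ + lam) := by ring
  -- put it together
  rw [hLHS]
  calc |φ ⬝ᵥ y| ≤ Real.sqrt (φ ⬝ᵥ φ) * Real.sqrt Q := cs_dot φ y
    _ ≤ 1 * Real.sqrt Q := mul_le_mul_of_nonneg_right hφ (Real.sqrt_nonneg _)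
    _ = Real.sqrt Q := one_mul _
    _ ≤ Real.sqrt (nd ^ 2 / (γ + lam)) := Real.sqrt_le_sqrt hkey
    _ = nd / Real.sqrt (γ + lam) := by
        rw [Real.sqrt_div (sq_nonneg nd), Real.sqrt_sq hnd0]
end
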